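/- Let V be a finite-dimensional real vector space, U ⊆ V a subspace with inclusion map i : U → V, and L ⊆ 𝕋V = V × V* a Lagrangian subspace. Then i_!(i^!(L)) = L[{0} × ann(U)] = (L ∩ (U × V*)) + ({0} × ann(U)), where ann(U) := {ξ ∈ V* : ξ vanishes on U}, i^!(L) := {(u, ξ|_U) : u ∈ U, (u, ξ) ∈ L} ⊆ U × U*, and i_!(L') := {(u, ζ) ∈ V × V* : u ∈ U, (u, ζ|_U) ∈ L'}. -/

import Mathlib

open Module

variable {V W : Type*} [AddCommGroup V] [Module ℝ V] [AddCommGroup W] [Module ℝ W]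

/-- The canonical symmetric pairing on the generalized tangent space `𝕋V = V × V*`:
`⟨(u,ξ),(v,η)⟩ = ξ(v) + η(u)`. -/
noncomputable def gpair : (V × Module.Dual ℝ V) →ₗ[ℝ] (V × Module.Dual ℝ V) →ₗ[ℝ] ℝ :=
  LinearMap.mk₂ ℝ (fun a b => a.2 b.1 + b.2 a.1)
    (fun a a' b => by
      simp only [Prod.fst_add, Prod.snd_add, LinearMap.add_apply, map_add]; ring)
    (fun r a b => by
      simp only [Prod.smul_fst, Prod.smul_snd, LinearMap.smul_apply, map_smul,
        smul_eq_mul]; ring)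
    (fun a b b' => by
      simp only [Prod.fst_add, Prod.snd_add, LinearMap.add_apply, map_add]; ring)
    (fun r a b => by
      simp only [Prod.smul_fst, Prod.smul_snd, LinearMap.smul_apply, map_smul,
        smul_eq_mul]; ring)

/-- Orthogonal complement with respect to the canonical pairing on `𝕋V`. -/
noncomputable def gperp (S : Submodule ℝ (V × Module.Dual ℝ V)) :
    Submodule ℝ (V × Module.Dual ℝ V) where
  carrier := {a | ∀ b ∈ S, gpair a b = 0}
  add_mem' := by
    intro a b ha hb c hc
    rw [map_add, LinearMap.add_apply, ha c hc, hb c hc, add_zero]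
  zero_mem' := by
    intro c hc
    rw [map_zero, LinearMap.zero_apply]
  smul_mem' := by
    intro r a ha c hc
    rw [map_smul, LinearMap.smul_apply, ha c hc, smul_zero]

/-- A subspace of `𝕋V` is Lagrangian if it equals its own orthogonal complement. -/
def IsLagrangian (L : Submodule ℝ (V × Module.Dual ℝ V)) : Prop :=
  gperp L = L

/-- A linear map `π : V* → V` is skew-symmetric. -/
def IsSkew (π : Module.Dual ℝ V →ₗ[ℝ] V) : Prop :=
  ∀ ξ η : Module.Dual ℝ V, η (π ξ) = -(ξ (π η))

/-- The tangent product `L ⋆ R = {(u, ξ+η) : (u,ξ) ∈ L, (u,η) ∈ R}`. -/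
def tanProd (L R : Submodule ℝ (V × Module.Dual ℝ V)) :
    Submodule ℝ (V × Module.Dual ℝ V) where
  carrier := {a | ∃ ξ η : Module.Dual ℝ V, (a.1, ξ) ∈ L ∧ (a.1, η) ∈ R ∧ a.2 = ξ + η}
  add_mem' := by
    rintro a b ⟨ξ, η, h1, h2, h3⟩ ⟨ξ', η', h1', h2', h3'⟩
    refine ⟨ξ + ξ', η + η', ?_, ?_, ?_⟩
    · simpa [Prod.fst_add] using L.add_mem h1 h1'
    · simpa [Prod.fst_add] using R.add_mem h2 h2'
    · simp only [Prod.snd_add, h3, h3']; abel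
  zero_mem' := ⟨0, 0, by (try simp only [Prod.fst_zero, Prod.snd_zero, map_zero, LinearMap.zero_comp]); exact L.zero_mem, by (try simp only [Prod.fst_zero, Prod.snd_zero, map_zero, LinearMap.zero_comp]); exact R.zero_mem, by simp⟩
  smul_mem' := by
    rintro r a ⟨ξ, η, h1, h2, h3⟩
    refine ⟨r • ξ, r • η, ?_, ?_, ?_⟩
    · simpa [Prod.smul_fst] using L.smul_mem r h1
    · simpa [Prod.smul_fst] using R.smul_mem r h2
    · simp only [Prod.smul_snd, h3, smul_add]

/-- The cotangent product `L ⊛ R = {(u+v, ξ) : (u,ξ) ∈ L, (v,ξ) ∈ R}`. -/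
def cotProd (L R : Submodule ℝ (V × Module.Dual ℝ V)) :
    Submodule ℝ (V × Module.Dual ℝ V) where
  carrier := {a | ∃ u v : V, (u, a.2) ∈ L ∧ (v, a.2) ∈ R ∧ a.1 = u + v}
  add_mem' := by
    rintro a b ⟨u, v, h1, h2, h3⟩ ⟨u', v', h1', h2', h3'⟩
    refine ⟨u + u', v + v', ?_, ?_, ?_⟩
    · simpa [Prod.snd_add] using L.add_mem h1 h1'
    · simpa [Prod.snd_add] using R.add_mem h2 h2'
    · simp only [Prod.fst_add, h3, h3']; abel
  zero_mem' := ⟨0, 0, by (try simp only [Prod.fst_zero, Prod.snd_zero, map_zero, LinearMap.zero_comp]); exact L.zero_mem, by (try simp only [Prod.fst_zero, Prod.snd_zero, map_zero, LinearMap.zero_comp]); exact R.zero_mem, by simp⟩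
  smul_mem' := by
    rintro r a ⟨u, v, h1, h2, h3⟩
    refine ⟨r • u, r • v, ?_, ?_, ?_⟩
    · simpa [Prod.smul_snd] using L.smul_mem r h1
    · simpa [Prod.smul_snd] using R.smul_mem r h2
    · simp only [Prod.smul_fst, h3, smul_add]

/-- The backward image `φ^!(L) = {(u, η ∘ φ) : (φ(u), η) ∈ L}`. -/
def back (φ : V →ₗ[ℝ] W) (L : Submodule ℝ (W × Module.Dual ℝ W)) :
    Submodule ℝ (V × Module.Dual ℝ V) where
  carrier := {a | ∃ η : Module.Dual ℝ W, (φ a.1, η) ∈ L ∧ a.2 = η.comp φ}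
  add_mem' := by
    rintro a b ⟨η, h1, h2⟩ ⟨η', h1', h2'⟩
    refine ⟨η + η', ?_, ?_⟩
    · simpa [Prod.fst_add, map_add] using L.add_mem h1 h1'
    · simp only [Prod.snd_add, h2, h2', LinearMap.add_comp]
  zero_mem' := ⟨0, by (try simp only [Prod.fst_zero, Prod.snd_zero, map_zero, LinearMap.zero_comp]); exact L.zero_mem, by simp⟩
  smul_mem' := by
    rintro r a ⟨η, h1, h2⟩
    refine ⟨r • η, ?_, ?_⟩
    · simpa [Prod.smul_fst, map_smul] using L.smul_mem r h1
    · simp only [Prod.smul_snd, h2, LinearMap.smul_comp]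

/-- The forward image `φ_!(L) = {(φ(u), η) : (u, η ∘ φ) ∈ L}`. -/
def fwd (φ : V →ₗ[ℝ] W) (L : Submodule ℝ (V × Module.Dual ℝ V)) :
    Submodule ℝ (W × Module.Dual ℝ W) where
  carrier := {b | ∃ u : V, φ u = b.1 ∧ (u, b.2.comp φ) ∈ L}
  add_mem' := by
    rintro a b ⟨u, h1, h2⟩ ⟨u', h1', h2'⟩
    refine ⟨u + u', ?_, ?_⟩
    · simp only [map_add, h1, h1', Prod.fst_add]
    · have := L.add_mem h2 h2'
      simpa [Prod.snd_add, LinearMap.add_comp] using this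
  zero_mem' := ⟨0, by simp, by (try simp only [Prod.fst_zero, Prod.snd_zero, map_zero, LinearMap.zero_comp]); exact L.zero_mem⟩
  smul_mem' := by
    rintro r a ⟨u, h1, h2⟩
    refine ⟨r • u, ?_, ?_⟩
    · simp only [map_smul, h1, Prod.smul_fst]
    · have := L.smul_mem r h2
      simpa [Prod.smul_snd, LinearMap.smul_comp] using this

/-- The graph `Gr(π) = {(π(ξ), ξ) : ξ ∈ V*}` of a map `π : V* → V`. -/
def gr (π : Module.Dual ℝ V →ₗ[ℝ] V) : Submodule ℝ (V × Module.Dual ℝ V) where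
  carrier := {a | π a.2 = a.1}
  add_mem' := by
    intro a b ha hb
    simp only [Set.mem_setOf_eq, Prod.fst_add, Prod.snd_add, map_add] at *
    rw [ha, hb]
  zero_mem' := by simp
  smul_mem' := by
    intro r a ha
    simp only [Set.mem_setOf_eq, Prod.smul_fst, Prod.smul_snd, map_smul] at *
    rw [ha]

/-! For `J = {0} × ann U` one has `J^⊥ = U × V*`, and a pair `(u, ζ)` lies in `i_! i^! L` exactly
when `u ∈ U` and `ζ` agrees on `U` with some `ξ` such that `(u, ξ) ∈ L`, i.e. `ζ - ξ ∈ ann U`;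
that is membership in `(L ∩ (U × V*)) + J`. -/

theorem Submodule.mem_inf_prod_top_sup_bot_prod {R M N : Type*} [Ring R] [AddCommGroup M]
    [Module R M] [AddCommGroup N] [Module R N] (L : Submodule R (M × N)) (A : Submodule R M)
    (B : Submodule R N) (a : M × N) :
    a ∈ (L ⊓ A.prod ⊤) ⊔ (⊥ : Submodule R M).prod B ↔
      a.1 ∈ A ∧ ∃ ξ, (a.1, ξ) ∈ L ∧ a.2 - ξ ∈ B := by
  simp only [Submodule.mem_sup, Submodule.mem_inf, Submodule.mem_prod, Submodule.mem_bot,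
    Submodule.mem_top, and_true]
  constructor
  · rintro ⟨b, ⟨hbL, hbA⟩, c, ⟨hc₁, hcB⟩, rfl⟩
    simp only [Prod.fst_add, Prod.snd_add, hc₁, add_zero]
    exact ⟨hbA, b.2, hbL, by simpa using hcB⟩
  · rintro ⟨ha₁, ξ, hξL, hξB⟩
    exact ⟨(a.1, ξ), ⟨hξL, ha₁⟩, (0, a.2 - ξ), ⟨rfl, hξB⟩, by simp⟩

@[simp]
theorem gpair_apply (a b : V × Module.Dual ℝ V) : gpair a b = a.2 b.1 + b.2 a.1 :=
  rfl

theorem gperp_bot_prod_dualAnnihilator (U : Submodule ℝ V) :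
    gperp ((⊥ : Submodule ℝ V).prod U.dualAnnihilator) = U.prod ⊤ := by
  ext a
  constructor
  · intro ha
    refine Submodule.mem_prod.mpr ⟨?_, trivial⟩
    rw [← Subspace.forall_mem_dualAnnihilator_apply_eq_zero_iff]
    intro ζ hζ
    simpa using ha (0, ζ) ⟨Submodule.zero_mem _, hζ⟩
  · intro ha b hb
    obtain ⟨ha₁, -⟩ := Submodule.mem_prod.mp ha
    obtain ⟨hb₁, hb₂⟩ := Submodule.mem_prod.mp hb
    rw [Submodule.mem_bot] at hb₁
    simp [hb₁, (Submodule.mem_dualAnnihilator _).mp hb₂ a.1 ha₁]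

theorem Submodule.comp_subtype_eq_iff_sub_mem_dualAnnihilator {R M : Type*} [CommRing R]
    [AddCommGroup M] [Module R M] (U : Submodule R M) (ζ ξ : Module.Dual R M) :
    ζ.comp U.subtype = ξ.comp U.subtype ↔ ζ - ξ ∈ U.dualAnnihilator :=
  (LinearMap.sub_mem_ker_iff (f := U.dualRestrict)).symm

theorem mem_fwd_subtype_back_subtype (U : Submodule ℝ V) (L : Submodule ℝ (V × Module.Dual ℝ V))
    (a : V × Module.Dual ℝ V) :
    a ∈ fwd U.subtype (back U.subtype L) ↔
      a.1 ∈ U ∧ ∃ ξ, (a.1, ξ) ∈ L ∧ a.2 - ξ ∈ U.dualAnnihilator := by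
  obtain ⟨v, ζ⟩ := a
  simp only [← Submodule.comp_subtype_eq_iff_sub_mem_dualAnnihilator]
  constructor
  · rintro ⟨u, rfl, ξ, hξL, hξ⟩
    exact ⟨u.2, ξ, hξL, hξ⟩
  · rintro ⟨ha₁, ξ, hξL, hξ⟩
    exact ⟨⟨v, ha₁⟩, rfl, ξ, hξL, hξ⟩

theorem fwd_subtype_back_subtype (U : Submodule ℝ V) (L : Submodule ℝ (V × Module.Dual ℝ V)) :
    fwd U.subtype (back U.subtype L)
      = (L ⊓ U.prod ⊤) ⊔ (⊥ : Submodule ℝ V).prod U.dualAnnihilator := by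
  ext a
  rw [mem_fwd_subtype_back_subtype, Submodule.mem_inf_prod_top_sup_bot_prod]

theorem stmt11_general
    (U : Submodule ℝ V) (L : Submodule ℝ (V × Module.Dual ℝ V)) :
    fwd U.subtype (back U.subtype L)
        = (L ⊓ gperp ((⊥ : Submodule ℝ V).prod U.dualAnnihilator))
            ⊔ (⊥ : Submodule ℝ V).prod U.dualAnnihilator
      ∧ fwd U.subtype (back U.subtype L)
        = (L ⊓ U.prod (⊤ : Submodule ℝ (Module.Dual ℝ V)))
            ⊔ (⊥ : Submodule ℝ V).prod U.dualAnnihilator := by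
  rw [gperp_bot_prod_dualAnnihilator]
  exact ⟨fwd_subtype_back_subtype U L, fwd_subtype_back_subtype U L⟩

theorem stmt11 [FiniteDimensional ℝ V]
    (U : Submodule ℝ V) (L : Submodule ℝ (V × Module.Dual ℝ V))
    (hL : IsLagrangian L) :
    fwd U.subtype (back U.subtype L)
        = (L ⊓ gperp ((⊥ : Submodule ℝ V).prod U.dualAnnihilator))
            ⊔ (⊥ : Submodule ℝ V).prod U.dualAnnihilator
      ∧ fwd U.subtype (back U.subtype L)
        = (L ⊓ U.prod (⊤ : Submodule ℝ (Module.Dual ℝ V)))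
            ⊔ (⊥ : Submodule ℝ V).prod U.dualAnnihilator :=
  stmt11_general U L
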